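/- Let h > 0, let f : ℝ → ℝ be continuously differentiable with sup_{n ∈ ℕ} |f'(n)| = ∞, and let d : C¹([-h,0],ℝ) → (-h,0) be continuously differentiable. Define F(φ) = f(φ(d(φ))). Then for the constant functions 𝐧 ∈ C¹ with value n ∈ ℕ, the derivative satisfies |DF(𝐧)𝟙| = |f'(n)|, where 𝟙 is the constant function with value 1; consequently sup_{n ∈ ℕ} ‖DF(𝐧)‖ = ∞. -/

import Mathlib

open Set

/-- The Banach space `C¹([-h,0],ℝ)`, modelled as the closed subspace of
`C([-h,0],ℝ) × C([-h,0],ℝ)` consisting of pairs `(φ, φ')` where the second component is the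
derivative of the first within `[-h,0]`. -/
noncomputable def D1 (h : ℝ) (hh : 0 < h) :
    Submodule ℝ (C(Icc (-h) 0, ℝ) × C(Icc (-h) 0, ℝ)) where
  carrier := {p | ∀ t : Icc (-h) 0,
      HasDerivWithinAt (fun s : ℝ => p.1 (projIcc (-h) 0 (by linarith) s))
        (p.2 t) (Icc (-h) 0) (t : ℝ)}
  add_mem' := by
    intro p q hp hq t
    first
      | exact (hp t).add (hq t)
      | simpa [Pi.add_def] using (hp t).add (hq t)
  zero_mem' := by
    intro t
    simpa using hasDerivWithinAt_const (t : ℝ) (Icc (-h) 0) (0 : ℝ)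
  smul_mem' := by
    intro c p hp t
    first
      | exact (hp t).const_smul c
      | simpa [Pi.smul_def] using (hp t).const_smul c

noncomputable instance D1.instNormedAddCommGroup (h : ℝ) (hh : 0 < h) :
    NormedAddCommGroup (D1 h hh) := by infer_instance

noncomputable instance D1.instNormedSpace (h : ℝ) (hh : 0 < h) :
    NormedSpace ℝ (D1 h hh) := by infer_instance

set_option maxHeartbeats 1000000 in
/-- If `f` is continuously differentiable with `sup_n |f'(n)| = ∞` and
`d : C¹([-h,0],ℝ) → (-h,0)` is continuously differentiable, then for
`F(φ) = f(φ(d(φ)))` and the constant functions `𝐧`, one has `|DF(𝐧)𝟙| = |f'(n)|`, and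
consequently `sup_n ‖DF(𝐧)‖ = ∞`. -/
theorem stmt14 (h : ℝ) (hh : 0 < h) (f : ℝ → ℝ) (hf : ContDiff ℝ 1 f)
    (hf' : ¬ BddAbove (Set.range fun n : ℕ => |deriv f n|))
    (d : D1 h hh → ℝ) (hd : ContDiff ℝ 1 d) (hdr : ∀ φ, d φ ∈ Ioo (-h) 0)
    (F : D1 h hh → ℝ)
    (hF : ∀ φ : D1 h hh, F φ = f ((φ : C(Icc (-h) 0, ℝ) × C(Icc (-h) 0, ℝ)).1
      (projIcc (-h) 0 (by linarith) (d φ))))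
    (cst : ℝ → D1 h hh)
    (hcst : ∀ a : ℝ, (cst a : C(Icc (-h) 0, ℝ) × C(Icc (-h) 0, ℝ))
      = (ContinuousMap.const _ a, 0)) :
    (∀ n : ℕ, |fderiv ℝ F (cst n) (cst 1)| = |deriv f n|) ∧
    ¬ BddAbove (Set.range fun n : ℕ => ‖fderiv ℝ F (cst n)‖) := by
  have hle : (-h : ℝ) ≤ 0 := by linarith
  haveI : Nonempty (Icc (-h) (0:ℝ)) := ⟨⟨0, right_mem_Icc.2 hle⟩⟩
  -- Lipschitz-type key estimate
  have key : ∀ χ : D1 h hh, ∀ u ∈ Icc (-h) (0:ℝ), ∀ v ∈ Icc (-h) (0:ℝ),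
      |(χ : C(Icc (-h) 0, ℝ) × C(Icc (-h) 0, ℝ)).1 (projIcc (-h) 0 hle u) -
        (χ : C(Icc (-h) 0, ℝ) × C(Icc (-h) 0, ℝ)).1 (projIcc (-h) 0 hle v)|
        ≤ ‖χ‖ * |u - v| := by
    intro χ u hu v hv
    have hderiv : ∀ x ∈ Icc (-h) (0:ℝ), HasDerivWithinAt
        (fun s : ℝ => (χ : C(Icc (-h) 0, ℝ) × C(Icc (-h) 0, ℝ)).1 (projIcc (-h) 0 hle s))
        ((χ : C(Icc (-h) 0, ℝ) × C(Icc (-h) 0, ℝ)).2 (projIcc (-h) 0 hle x))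
        (Icc (-h) 0) x := by
      intro x hx
      have := χ.property ⟨x, hx⟩
      simpa [projIcc_of_mem hle hx] using this
    have hbound : ∀ x ∈ Icc (-h) (0:ℝ),
        ‖(χ : C(Icc (-h) 0, ℝ) × C(Icc (-h) 0, ℝ)).2 (projIcc (-h) 0 hle x)‖ ≤ ‖χ‖ := by
      intro x hx
      exact le_trans (ContinuousMap.norm_coe_le_norm _ _) (norm_snd_le _)
    have := (convex_Icc (-h) (0:ℝ)).norm_image_sub_le_of_norm_hasDerivWithin_le
      hderiv hbound hv hu
    simpa [Real.norm_eq_abs] using this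
  -- the evaluation map G
  set G : D1 h hh → ℝ := fun φ =>
    (φ : C(Icc (-h) 0, ℝ) × C(Icc (-h) 0, ℝ)).1 (projIcc (-h) 0 hle (d φ)) with hG
  have hFeq : F = fun φ => f (G φ) := funext hF
  have hGcst : ∀ a : ℝ, G (cst a) = a := by
    intro a; simp [hG, hcst]
  -- the candidate derivative of G at cst n
  have hD : ∀ n : ℕ, HasFDerivAt G
      ((ContinuousMap.evalCLM ℝ (projIcc (-h) 0 hle (d (cst n)))).comp
        ((ContinuousLinearMap.fst ℝ _ _).comp (D1 h hh).subtypeL)) (cst n) := by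
    intro n
    rw [hasFDerivAt_iff_isLittleO_nhds_zero]
    -- Lipschitz bound for d near cst n
    have hdd : HasFDerivAt d (fderiv ℝ d (cst n)) (cst n) :=
      ((hd.differentiable one_ne_zero) (cst n)).hasFDerivAt
    have hO : (fun χ : D1 h hh => d (cst n + χ) - d (cst n)) =O[nhds 0] (fun χ => χ) := by
      have h1 := hdd.isBigO_sub
      have h2 : Filter.Tendsto (fun χ : D1 h hh => cst n + χ) (nhds 0) (nhds (cst n)) := by
        simpa using (Filter.tendsto_id (x := nhds (0 : D1 h hh))).const_add (cst n)
      have h3 := h1.comp_tendsto h2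
      simp only [Function.comp_def, add_sub_cancel_left] at h3
      exact h3
    obtain ⟨C, hC⟩ := Asymptotics.isBigO_iff.1 hO
    rw [Asymptotics.isLittleO_iff]
    intro ε hε
    set C' : ℝ := max C 0 + 1 with hC'
    have hC'pos : 0 < C' := by positivity
    have hball : ∀ᶠ χ : D1 h hh in nhds 0, ‖χ‖ < ε / C' := by
      have := Metric.ball_mem_nhds (0 : D1 h hh) (by positivity : 0 < ε / C')
      filter_upwards [this] with χ hχ
      rwa [Metric.mem_ball, dist_zero_right] at hχ
    filter_upwards [hC, hball] with χ hχ1 hχ2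
    -- rewrite the error term
    have hval : G (cst n + χ) - G (cst n) -
        ((ContinuousMap.evalCLM ℝ (projIcc (-h) 0 hle (d (cst n)))).comp
          ((ContinuousLinearMap.fst ℝ _ _).comp (D1 h hh).subtypeL)) χ
        = (χ : C(Icc (-h) 0, ℝ) × C(Icc (-h) 0, ℝ)).1 (projIcc (-h) 0 hle (d (cst n + χ)))
          - (χ : C(Icc (-h) 0, ℝ) × C(Icc (-h) 0, ℝ)).1 (projIcc (-h) 0 hle (d (cst n))) := by
      simp only [hG, Submodule.coe_add, hcst, ContinuousLinearMap.comp_apply,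
        ContinuousLinearMap.coe_fst', Submodule.coe_subtypeL', Submodule.coe_subtype]
      simp [ContinuousMap.evalCLM]
    rw [Real.norm_eq_abs, hval]
    have hu : d (cst n + χ) ∈ Icc (-h) (0:ℝ) := Ioo_subset_Icc_self (hdr _)
    have hv : d (cst n) ∈ Icc (-h) (0:ℝ) := Ioo_subset_Icc_self (hdr _)
    have h1 := key χ _ hu _ hv
    have h2 : |d (cst n + χ) - d (cst n)| ≤ C' * ‖χ‖ := by
      have := hχ1
      rw [Real.norm_eq_abs] at this
      have hCle : C ≤ C' := by simp [hC']; nlinarith [le_max_left C (0:ℝ)]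
      calc |d (cst n + χ) - d (cst n)| ≤ C * ‖χ‖ := this
        _ ≤ C' * ‖χ‖ := by nlinarith [norm_nonneg χ]
    have hnn : (0:ℝ) ≤ ‖χ‖ := norm_nonneg χ
    calc |(χ : C(Icc (-h) 0, ℝ) × C(Icc (-h) 0, ℝ)).1 (projIcc (-h) 0 hle (d (cst n + χ)))
          - (χ : C(Icc (-h) 0, ℝ) × C(Icc (-h) 0, ℝ)).1 (projIcc (-h) 0 hle (d (cst n)))|
        ≤ ‖χ‖ * |d (cst n + χ) - d (cst n)| := h1
      _ ≤ ‖χ‖ * (C' * ‖χ‖) := by nlinarith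
      _ ≤ ε * ‖χ‖ := by nlinarith [hχ2.le, (le_div_iff₀ hC'pos).1 hχ2.le]
  -- derivative of F
  have hDF : ∀ n : ℕ, HasFDerivAt F ((deriv f n) •
      ((ContinuousMap.evalCLM ℝ (projIcc (-h) 0 hle (d (cst n)))).comp
        ((ContinuousLinearMap.fst ℝ _ _).comp (D1 h hh).subtypeL))) (cst n) := by
    intro n
    rw [hFeq]
    have hfd : HasDerivAt f (deriv f (n:ℝ)) (G (cst n)) := by
      rw [hGcst n]; exact ((hf.differentiable one_ne_zero) _).hasDerivAt
    exact hfd.comp_hasFDerivAt (cst n) (hD n)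
  have happ : ∀ n : ℕ, fderiv ℝ F (cst n) (cst 1) = deriv f n := by
    intro n
    rw [(hDF n).fderiv]
    simp only [ContinuousLinearMap.smul_apply, ContinuousLinearMap.comp_apply,
      ContinuousLinearMap.coe_fst', Submodule.coe_subtypeL', Submodule.coe_subtype, hcst]
    simp [ContinuousMap.evalCLM]
  have hnorm1 : ‖cst 1‖ = 1 := by
    have : ‖cst 1‖ = ‖(cst 1 : C(Icc (-h) 0, ℝ) × C(Icc (-h) 0, ℝ))‖ := rfl
    rw [this, hcst, Prod.norm_def]
    have hcne : ‖ContinuousMap.const (Icc (-h) (0:ℝ)) (1:ℝ)‖ = 1 := by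
      apply le_antisymm
      · exact (ContinuousMap.norm_le _ zero_le_one).2 (fun x => by simp)
      · simpa using ContinuousMap.norm_coe_le_norm
          (ContinuousMap.const (Icc (-h) (0:ℝ)) (1:ℝ)) (Classical.arbitrary _)
    simp [hcne]
  constructor
  · intro n; rw [happ n]
  · intro hbdd
    obtain ⟨M, hM⟩ := hbdd
    apply hf'
    refine ⟨M, ?_⟩
    rintro x ⟨n, rfl⟩
    have h1 : |deriv f n| ≤ ‖fderiv ℝ F (cst n)‖ := by
      have := (fderiv ℝ F (cst n)).le_opNorm (cst 1)
      rw [happ n, hnorm1, mul_one, Real.norm_eq_abs] at this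
      exact this
    exact le_trans h1 (hM ⟨n, rfl⟩)
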